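/- Let a be a bracket vector, let X be a representation in C_a, and let Z be a direct sum of interval representations of the form E^{i(i+a_i−1)} with a_i ≥ 1. Then every extension of Z by X is trivial (split). -/

import Mathlib

open Classical

/-- A representation of a quiver (given by vertex type `ι`, arrow type `E`,
and source/target maps `s t : E → ι`) over a field `K`: a finite-dimensional
`K`-vector space at each vertex and a linear map along each arrow. -/
structure QRep (K : Type) [Field K] {ι : Type} {E : Type} (s t : E → ι) : Type 1 where
  V : ι → Type
  [addV : ∀ i, AddCommGroup (V i)]
  [modV : ∀ i, Module K (V i)]
  [fdV : ∀ i, FiniteDimensional K (V i)]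
  f : ∀ e : E, V (s e) →ₗ[K] V (t e)

attribute [instance] QRep.addV QRep.modV QRep.fdV

namespace QRep

variable {K : Type} [Field K] {ι E : Type} {s t : E → ι}

/-- A morphism of representations: linear maps at each vertex commuting with the arrow maps. -/
structure Hom (X Y : QRep K s t) : Type where
  φ : ∀ i, X.V i →ₗ[K] Y.V i
  comm : ∀ e, (Y.f e).comp (φ (s e)) = (φ (t e)).comp (X.f e)

def Hom.Surjective {X Y : QRep K s t} (f : Hom X Y) : Prop := ∀ i, Function.Surjective (f.φ i)

def Hom.Injective {X Y : QRep K s t} (f : Hom X Y) : Prop := ∀ i, Function.Injective (f.φ i)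

/-- Two representations are isomorphic if there is a morphism bijective at every vertex. -/
def Iso (X Y : QRep K s t) : Prop := ∃ f : Hom X Y, ∀ i, Function.Bijective (f.φ i)

/-- Direct sum of two representations, taken vertexwise. -/
def dsum (X Y : QRep K s t) : QRep K s t where
  V i := X.V i × Y.V i
  f e := (X.f e).prodMap (Y.f e)

instance : Module.Finite K PUnit :=
  Module.Finite.of_surjective (0 : K →ₗ[K] PUnit) (fun x => ⟨0, Subsingleton.elim _ _⟩)

/-- The zero representation. -/
def zero : QRep K s t where
  V _ := PUnit
  f _ := 0

/-- A representation is zero if all its vector spaces are zero. -/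
def IsZero (X : QRep K s t) : Prop := ∀ i, ∀ x : X.V i, x = 0

/-- Indecomposable: nonzero, and not isomorphic to a direct sum of two nonzero representations. -/
def Indec (X : QRep K s t) : Prop :=
  ¬ X.IsZero ∧ ∀ A B : QRep K s t, Iso X (A.dsum B) → A.IsZero ∨ B.IsZero

/-- Direct sum of a finite list of representations. -/
noncomputable def dsumList : List (QRep K s t) → QRep K s t
  | [] => zero
  | X :: L => X.dsum (dsumList L)

/-- An extension `Y` of `Z` by `X`: an injective morphism `X → Y` and a surjective
morphism `Y → Z` whose vertexwise kernel is the image of `X`. -/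
structure Extension (X Y Z : QRep K s t) : Type where
  incl : Hom X Y
  proj : Hom Y Z
  inj : ∀ i, Function.Injective (incl.φ i)
  surj : ∀ i, Function.Surjective (proj.φ i)
  exact : ∀ i, LinearMap.ker (proj.φ i) = LinearMap.range (incl.φ i)

/-- An extension is trivial (split) if there is a morphism `Y → X` restricting to the identity on `X`. -/
def Extension.Trivial {X Y Z : QRep K s t} (E : Extension X Y Z) : Prop :=
  ∃ r : Hom Y X, ∀ i x, r.φ i (E.incl.φ i x) = x

/-- A subrepresentation of `Y`: a subspace at each vertex, stable under the arrow maps. -/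
structure Sub (Y : QRep K s t) : Type where
  p : ∀ i, Submodule K (Y.V i)
  stable : ∀ e, ∀ x ∈ p (s e), Y.f e x ∈ p (t e)

def Sub.toRep {Y : QRep K s t} (S : Sub Y) : QRep K s t where
  V i := S.p i
  f e := (Y.f e).restrict (S.stable e)

/-- The quotient representation `Y/X`. -/
def Sub.quot {Y : QRep K s t} (S : Sub Y) : QRep K s t where
  V i := Y.V i ⧸ S.p i
  f e := Submodule.mapQ (S.p (s e)) (S.p (t e)) (Y.f e) (fun x hx => S.stable e x hx)

/-- The inclusion morphism of a subrepresentation. -/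
def Sub.incl {Y : QRep K s t} (S : Sub Y) : Hom S.toRep Y where
  φ i := (S.p i).subtype
  comm e := by ext x; rfl

/-- The quotient morphism onto the quotient representation. -/
def Sub.mkQ {Y : QRep K s t} (S : Sub Y) : Hom Y S.quot where
  φ i := (S.p i).mkQ
  comm e := by ext x; first | rfl | simp [Sub.quot, Submodule.mapQ_apply, LinearMap.comp_apply]

/-- The space of morphisms between two representations, as a subspace of the product of Hom spaces. -/
def HomSpace (X Y : QRep K s t) : Submodule K (∀ i, X.V i →ₗ[K] Y.V i) where
  carrier := {φ | ∀ e, (Y.f e).comp (φ (s e)) = (φ (t e)).comp (X.f e)}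
  add_mem' := by
    intro a b ha hb e
    simp only [Set.mem_setOf_eq] at ha hb
    simp [LinearMap.comp_add, LinearMap.add_comp, ha e, hb e]
  zero_mem' := by intro e; simp
  smul_mem' := by
    intro c a ha e
    simp only [Set.mem_setOf_eq] at ha
    simp [LinearMap.comp_smul, LinearMap.smul_comp, ha e]

end QRep
/-- The source of the `e`-th arrow of the linearly oriented quiver `Aₙ`
(vertices `0,…,n-1`, arrows `e → e+1` for `0 ≤ e < n-1`; 0-based indexing). -/
def ASrc (n : ℕ) (e : Fin (n - 1)) : Fin n := ⟨e.val, by have := e.isLt; omega⟩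

/-- The target of the `e`-th arrow of `Aₙ`. -/
def ATgt (n : ℕ) (e : Fin (n - 1)) : Fin n := ⟨e.val + 1, by have := e.isLt; omega⟩

/-- Representations of the linearly oriented quiver `Aₙ`. -/
abbrev ARep (K : Type) [Field K] (n : ℕ) := QRep K (ASrc n) (ATgt n)

/-- The canonical map from `M` to a submodule `T`: the identity if `T = ⊤`, zero otherwise. -/
noncomputable def toSub {K M : Type} [Field K] [AddCommGroup M] [Module K M]
    (T : Submodule K M) : M →ₗ[K] T :=
  if h : T = ⊤ then LinearMap.codRestrict T LinearMap.id (fun x => by simp [h]) else 0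

/-- The vertex spaces of the interval representation `E^{ij}`: `K` for `i ≤ p ≤ j`, zero otherwise. -/
def ESub (K : Type) [Field K] (n i j : ℕ) (p : Fin n) : Submodule K K :=
  if i ≤ p.val ∧ p.val ≤ j then ⊤ else ⊥

/-- The interval representation `E^{ij}` of `Aₙ` (0-based): one-dimensional spaces at
vertices `i,…,j`, identity maps between consecutive ones, zero elsewhere. -/
noncomputable def Eij (K : Type) [Field K] (n i j : ℕ) : ARep K n where
  V p := ESub K n i j p
  f e := (toSub (ESub K n i j (ATgt n e))).comp (ESub K n i j (ASrc n e)).subtype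

/-- Direct sum of interval representations indexed by a list of pairs. -/
noncomputable def intervalSum (K : Type) [Field K] (n : ℕ) (L : List (ℕ × ℕ)) : ARep K n :=
  QRep.dsumList (L.map fun pr => Eij K n pr.1 pr.2)

/-- Membership of the pair `(i,j)` in `F_a = {(i,j) : i ≤ j < i + a_i}` (0-based;
`pr.2 < n` ensures the interval lies in the vertex range). -/
def condF (n : ℕ) (a : ℕ → ℕ) (pr : ℕ × ℕ) : Prop :=
  pr.1 ≤ pr.2 ∧ pr.2 < n ∧ pr.2 < pr.1 + a pr.1

/-- An object lies in the full additive subcategory determined by the interval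
representations `E^{ij}` with `cond (i,j)`, i.e. it is isomorphic to a finite direct sum
of such intervals. -/
def InCat (K : Type) [Field K] (n : ℕ) (cond : ℕ × ℕ → Prop) (X : ARep K n) : Prop :=
  ∃ L : List (ℕ × ℕ), (∀ pr ∈ L, cond pr) ∧ QRep.Iso X (intervalSum K n L)

/-- The subcategory of intervals satisfying `cond` is closed under quotients. -/
def QuotClosedCat (K : Type) [Field K] (n : ℕ) (cond : ℕ × ℕ → Prop) : Prop :=
  ∀ X Y : ARep K n, InCat K n cond X → (∃ f : QRep.Hom X Y, f.Surjective) → InCat K n cond Y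

/-- The subcategory of intervals satisfying `cond` is closed under extensions. -/
def ExtClosedCat (K : Type) [Field K] (n : ℕ) (cond : ℕ × ℕ → Prop) : Prop :=
  ∀ X Y Z : ARep K n, InCat K n cond X → InCat K n cond Z →
    Nonempty (QRep.Extension X Y Z) → InCat K n cond Y

/-- `a` is a bracket vector (membership in `M` stated separately): whenever
`1 ≤ j ≤ a i` (and `i + j` is a vertex), `j + a_{i+j} ≤ a_i`. 0-based indices. -/
def IsBracketVecN (n : ℕ) (a : ℕ → ℕ) : Prop :=
  ∀ i < n, ∀ j : ℕ, 1 ≤ j → j ≤ a i → i + j < n → j + a (i + j) ≤ a i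


/-!
For a bracket vector `a` and `X ∈ C_a`, the path map `X_i → X_{i + a_i}` is surjective: by the
bracket inequality, no interval `E^{cd}` of `C_a` with `i < c` reaches the vertex `i + a_i`.

A morphism from the maximal interval `E^{i,i+a_i-1}` to `Z` is the choice of a vector `z ∈ Z_i`
killed by the path map to `i + a_i`. Lift `z` to `y ∈ Y_i`; the image of `y` at `i + a_i` lies
in `X`, so by the surjectivity above we may subtract an element of `X_i` and assume it vanishes.
Then `y` defines a morphism from the interval to `Y` lifting the given one. Doing this summand by
summand lifts the identity of `Z` to a section of `Y → Z`, and a section splits the extension.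
-/

namespace QRep

variable {K : Type} [Field K] {ι E : Type} {s t : E → ι}

namespace Hom

def id (X : QRep K s t) : Hom X X where
  φ _ := LinearMap.id
  comm _ := rfl

def comp {X Y Z : QRep K s t} (g : Hom Y Z) (f : Hom X Y) : Hom X Z where
  φ i := (g.φ i).comp (f.φ i)
  comm e := by
    rw [← LinearMap.comp_assoc, g.comm, LinearMap.comp_assoc, f.comm, ← LinearMap.comp_assoc]

def inl (A B : QRep K s t) : Hom A (A.dsum B) where
  φ i := LinearMap.inl K (A.V i) (B.V i)
  comm e := LinearMap.ext fun _ => Prod.ext rfl (map_zero (B.f e))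

def inr (A B : QRep K s t) : Hom B (A.dsum B) where
  φ i := LinearMap.inr K (A.V i) (B.V i)
  comm e := LinearMap.ext fun _ => Prod.ext (map_zero (A.f e)) rfl

def coprod {A B W : QRep K s t} (f : Hom A W) (g : Hom B W) : Hom (A.dsum B) W where
  φ i := (f.φ i).coprod (g.φ i)
  comm e := LinearMap.ext fun (x : A.V (s e) × B.V (s e)) => by
    show W.f e (f.φ _ x.1 + g.φ _ x.2) = f.φ _ (A.f e x.1) + g.φ _ (B.f e x.2)
    rw [map_add, ← LinearMap.comp_apply, f.comm, ← LinearMap.comp_apply (W.f e), g.comm]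
    rfl

end Hom

namespace Extension

variable {X Y Z : QRep K s t} (ext : Extension X Y Z)

theorem proj_incl (i : ι) (x : X.V i) : ext.proj.φ i (ext.incl.φ i x) = 0 := by
  rw [← LinearMap.mem_ker, ext.exact]
  exact LinearMap.mem_range_self _ x

theorem trivial_of_section (σ : Hom Z Y) (hσ : ∀ i z, ext.proj.φ i (σ.φ i z) = z) :
    ext.Trivial := by
  have hker : ∀ i (y : Y.V i),
      y - σ.φ i (ext.proj.φ i y) ∈ LinearMap.range (ext.incl.φ i) := by
    intro i y
    rw [← ext.exact, LinearMap.mem_ker, map_sub, hσ, sub_self]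
  let r i : Y.V i →ₗ[K] X.V i :=
    (LinearEquiv.ofInjective _ (ext.inj i)).symm.toLinearMap.comp
      (LinearMap.codRestrict _ (LinearMap.id - (σ.φ i).comp (ext.proj.φ i)) (hker i))
  have hr : ∀ i y, ext.incl.φ i (r i y) = y - σ.φ i (ext.proj.φ i y) := fun i y =>
    LinearEquiv.ofInjective_symm_apply (h := ext.inj i) _ _
  refine ⟨⟨r, fun e => ?_⟩, fun i x => ext.inj i ?_⟩
  · ext y
    apply ext.inj
    have hincl := LinearMap.congr_fun (ext.incl.comm e) (r _ y)
    have hsec := LinearMap.congr_fun (σ.comm e) (ext.proj.φ _ y)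
    have hproj := LinearMap.congr_fun (ext.proj.comm e) y
    simp only [LinearMap.comp_apply] at hincl hsec hproj ⊢
    rw [← hincl, hr, hr, map_sub, hsec, hproj]
  · rw [hr, proj_incl, map_zero, sub_zero]

def LiftsFrom (A : QRep K s t) : Prop :=
  ∀ f : Hom A Z, ∃ g : Hom A Y, ∀ i x, ext.proj.φ i (g.φ i x) = f.φ i x

theorem liftsFrom_zero : ext.LiftsFrom zero := by
  intro f
  refine ⟨⟨fun _ => 0, fun _ => by simp⟩, fun i x => ?_⟩
  obtain rfl : x = 0 := Subsingleton.elim (α := PUnit) x 0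
  simp

theorem LiftsFrom.dsum {A B : QRep K s t} (hA : ext.LiftsFrom A) (hB : ext.LiftsFrom B) :
    ext.LiftsFrom (A.dsum B) := by
  intro f
  obtain ⟨gA, hgA⟩ := hA (f.comp (Hom.inl A B))
  obtain ⟨gB, hgB⟩ := hB (f.comp (Hom.inr A B))
  refine ⟨gA.coprod gB, fun i ⟨xA, xB⟩ => ?_⟩
  show ext.proj.φ i (gA.φ i xA + gB.φ i xB) = _
  rw [map_add, hgA, hgB]
  show f.φ i (xA, 0) + f.φ i (0, xB) = _
  exact (map_add (f.φ i) _ _).symm.trans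
    (congrArg (f.φ i) (Prod.ext (add_zero xA) (zero_add xB)))

theorem liftsFrom_dsumList :
    ∀ L : List (QRep K s t), (∀ A ∈ L, ext.LiftsFrom A) → ext.LiftsFrom (dsumList L)
  | [], _ => ext.liftsFrom_zero
  | A :: L, h => LiftsFrom.dsum ext (h A List.mem_cons_self)
      (liftsFrom_dsumList L fun B hB => h B (List.mem_cons_of_mem A hB))

end Extension

end QRep

section PathMaps

variable {K : Type} [Field K] {n : ℕ}

noncomputable def pathMap (W : ARep K n) (i : ℕ) :
    (k : ℕ) → (h : i + k < n) → W.V ⟨i, by omega⟩ →ₗ[K] W.V ⟨i + k, h⟩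
  | 0, _ => LinearMap.id
  | k + 1, h => (W.f ⟨i + k, by omega⟩).comp (pathMap W i k (by omega))

theorem QRep.Hom.map_pathMap {W W' : ARep K n} (f : QRep.Hom W W') (i : ℕ) :
    ∀ (k : ℕ) (h : i + k < n) (x : W.V ⟨i, by omega⟩),
      f.φ ⟨i + k, h⟩ (pathMap W i k h x) = pathMap W' i k h (f.φ ⟨i, by omega⟩ x)
  | 0, _, _ => rfl
  | k + 1, h, x => by
    have hf := LinearMap.congr_fun (f.comm ⟨i + k, by omega⟩) (pathMap W i k (by omega) x)
    exact hf.symm.trans (congrArg (W'.f ⟨i + k, by omega⟩) (f.map_pathMap i k (by omega) x))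

theorem pathMap_dsum (A B : ARep K n) (i : ℕ) :
    ∀ (k : ℕ) (h : i + k < n) (x : A.V ⟨i, by omega⟩ × B.V ⟨i, by omega⟩),
      pathMap (A.dsum B) i k h x = (pathMap A i k h x.1, pathMap B i k h x.2)
  | 0, _, _ => rfl
  | k + 1, h, x => by
    show (A.dsum B).f ⟨i + k, by omega⟩ (pathMap (A.dsum B) i k (by omega) x) = _
    rw [pathMap_dsum A B i k (by omega) x]
    rfl

theorem pathMap_dsum_surjective {A B : ARep K n} {i k : ℕ} (h : i + k < n)
    (hA : Function.Surjective (pathMap A i k h)) (hB : Function.Surjective (pathMap B i k h)) :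
    Function.Surjective (pathMap (A.dsum B) i k h) := by
  rintro ⟨yA, yB⟩
  obtain ⟨xA, rfl⟩ := hA yA
  obtain ⟨xB, rfl⟩ := hB yB
  exact ⟨(xA, xB), pathMap_dsum A B i k h (xA, xB)⟩

end PathMaps

section Intervals

variable {K : Type} [Field K] {n : ℕ}

theorem toSub_of_eq_top {M : Type} [AddCommGroup M] [Module K M] {T : Submodule K M}
    (hT : T = ⊤) (c : M) : (toSub T c : M) = c := by
  rw [toSub, dif_pos hT]
  rfl

theorem ESub_eq_top {i j : ℕ} {p : Fin n} (h : i ≤ p.val ∧ p.val ≤ j) :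
    ESub K n i j p = ⊤ :=
  if_pos h

theorem Eij_eq_zero {i j : ℕ} {p : Fin n} (h : ¬ (i ≤ p.val ∧ p.val ≤ j))
    (x : (Eij K n i j).V p) : x = 0 := by
  have hx := x.2
  simp only [ESub, h, if_false, Submodule.mem_bot] at hx
  exact Subtype.ext hx

theorem Eij_f_coe {c d : ℕ} (e : Fin (n - 1)) (hc : c ≤ e.val) (hd : e.val + 1 ≤ d)
    (x : ESub K n c d (ASrc n e)) : Subtype.val ((Eij K n c d).f e x) = x :=
  toSub_of_eq_top
    (ESub_eq_top (K := K) (i := c) (j := d) (p := ATgt n e) ⟨by simp only [ATgt]; omega, hd⟩) _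

def Eij.gen (c d : ℕ) (p : Fin n) (hp : c ≤ p.val ∧ p.val ≤ d) : (Eij K n c d).V p :=
  ⟨1, by rw [ESub_eq_top hp]; trivial⟩

theorem Eij.eq_smul_gen {c d : ℕ} {p : Fin n} (hp : c ≤ p.val ∧ p.val ≤ d)
    (x : (Eij K n c d).V p) : x = Subtype.val x • Eij.gen c d p hp :=
  Subtype.ext (mul_one (Subtype.val x)).symm

theorem pathMap_Eij_gen {c d i : ℕ} (hci : c ≤ i) (hid : i ≤ d) (hi : i < n) :
    ∀ (k : ℕ) (h : i + k < n) (hd : i + k ≤ d),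
      pathMap (Eij K n c d) i k h (Eij.gen c d ⟨i, hi⟩ ⟨hci, hid⟩) =
        Eij.gen c d ⟨i + k, h⟩ ⟨by simp only; omega, hd⟩
  | 0, _, _ => rfl
  | k + 1, h, hd => by
    show (Eij K n c d).f ⟨i + k, by omega⟩
      (pathMap (Eij K n c d) i k (by omega) (Eij.gen c d ⟨i, hi⟩ ⟨hci, hid⟩)) = _
    rw [pathMap_Eij_gen hci hid hi k (by omega) (by omega)]
    exact Subtype.ext (Eij_f_coe (c := c) (d := d) _ (by simp only; omega) (by simp only; omega) _)

theorem pathMap_Eij_surjective (c d : ℕ) {i k : ℕ} (h : i + k < n)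
    (hcd : c ≤ i + k → i + k ≤ d → c ≤ i) :
    Function.Surjective (pathMap (Eij K n c d) i k h) := by
  intro y
  by_cases hq : c ≤ i + k ∧ i + k ≤ d
  · have hci := hcd hq.1 hq.2
    have hid : i ≤ d := le_of_add_le_left hq.2
    have hi : i < n := by omega
    refine ⟨Subtype.val y • Eij.gen c d ⟨i, hi⟩ ⟨hci, hid⟩, ?_⟩
    rw [map_smul, pathMap_Eij_gen hci hid hi k h hq.2]
    exact (Eij.eq_smul_gen hq y).symm
  · exact ⟨0, (Eij_eq_zero hq y).symm ▸ map_zero _⟩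

theorem pathMap_intervalSum_surjective {i k : ℕ} (h : i + k < n) :
    ∀ L : List (ℕ × ℕ), (∀ pr ∈ L, pr.1 ≤ i + k → i + k ≤ pr.2 → pr.1 ≤ i) →
      Function.Surjective (pathMap (intervalSum K n L) i k h)
  | [], _ => fun _ => ⟨PUnit.unit, Subsingleton.elim (α := PUnit) _ _⟩
  | pr :: L, hL => pathMap_dsum_surjective h
      (pathMap_Eij_surjective pr.1 pr.2 h (hL pr List.mem_cons_self))
      (pathMap_intervalSum_surjective h L fun q hq => hL q (List.mem_cons_of_mem pr hq))

theorem pathMap_surjective_of_inCat {a : ℕ → ℕ} (hbr : IsBracketVecN n a) {X : ARep K n}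
    (hX : InCat K n (condF n a) X) {i m : ℕ} (hm : a i = m) (h : i + m < n) :
    Function.Surjective (pathMap X i m h) := by
  subst hm
  obtain ⟨L, hLF, f, hf⟩ := hX
  have hstart : ∀ pr ∈ L, pr.1 ≤ i + a i → i + a i ≤ pr.2 → pr.1 ≤ i := by
    intro pr hpr hc hd
    by_contra! hic
    obtain ⟨-, -, hF⟩ := hLF pr hpr
    have hbound := hbr i (by omega) (pr.1 - i) (by omega) (by omega) (by omega)
    rw [Nat.add_sub_cancel' hic.le] at hbound
    omega
  intro y
  obtain ⟨z, hz⟩ := pathMap_intervalSum_surjective h L hstart (f.φ _ y)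
  obtain ⟨x, rfl⟩ := (hf _).2 z
  exact ⟨x, (hf _).1 (by rw [f.map_pathMap, hz])⟩

end Intervals

section Lifting

variable {K : Type} [Field K] {n : ℕ}

/-- The images of `w ∈ W_i` under the path maps on the window `[i, i + k]`, zero elsewhere. -/
noncomputable def pathVec (W : ARep K n) (i k : ℕ) (hi : i < n) (w : W.V ⟨i, hi⟩)
    (p : Fin n) : W.V p :=
  if hp : i ≤ p.val ∧ p.val ≤ i + k then
    cast (congrArg W.V (Fin.ext (Nat.add_sub_cancel' hp.1)))
      (pathMap W i (p.val - i) (by omega) w)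
  else 0

section PathVec

variable (W : ARep K n) (i k : ℕ) (hi : i < n) (w : W.V ⟨i, hi⟩)

theorem pathVec_of_not_mem {p : Fin n} (hp : ¬ (i ≤ p.val ∧ p.val ≤ i + k)) :
    pathVec W i k hi w p = 0 :=
  dif_neg hp

theorem pathVec_add {m : ℕ} (h : i + m < n) (hm : m ≤ k) :
    pathVec W i k hi w ⟨i + m, h⟩ = pathMap W i m h w := by
  rw [pathVec, dif_pos ⟨Nat.le_add_right i m, by simp only; omega⟩]
  apply eq_of_heq
  refine (cast_heq _ _).trans ?_
  have hcongr : ∀ m' (hm' : m' = m) h', pathMap W i m' h' w ≍ pathMap W i m h w := by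
    rintro _ rfl _
    rfl
  exact hcongr _ (Nat.add_sub_cancel_left i m) _

theorem pathVec_step (e : Fin (n - 1)) (he : i ≤ e.val) (hek : e.val + 1 ≤ i + k) :
    W.f e (pathVec W i k hi w (ASrc n e)) = pathVec W i k hi w (ATgt n e) := by
  obtain ⟨e, he'⟩ := e
  dsimp only at he hek
  obtain ⟨m, rfl⟩ : ∃ m, e = i + m := ⟨e - i, by omega⟩
  show W.f ⟨i + m, he'⟩ (pathVec W i k hi w ⟨i + m, by omega⟩) =
    pathVec W i k hi w ⟨i + (m + 1), by omega⟩
  rw [pathVec_add W i k hi w _ (by omega), pathVec_add W i k hi w _ (by omega)]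
  rfl

theorem pathVec_last (hw : ∀ h : i + (k + 1) < n, pathMap W i (k + 1) h w = 0)
    (e : Fin (n - 1)) (he : e.val = i + k) :
    W.f e (pathVec W i k hi w (ASrc n e)) = 0 := by
  obtain ⟨e, he'⟩ := e
  obtain rfl : e = i + k := he
  show W.f ⟨i + k, he'⟩ (pathVec W i k hi w ⟨i + k, by omega⟩) = 0
  rw [pathVec_add W i k hi w _ le_rfl]
  exact hw (by omega)

noncomputable def Eij.homOfVec (hw : ∀ h : i + (k + 1) < n, pathMap W i (k + 1) h w = 0) :
    QRep.Hom (Eij K n i (i + k)) W where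
  φ p := (LinearMap.toSpanSingleton K (W.V p) (pathVec W i k hi w p)).comp
    (ESub K n i (i + k) p).subtype
  comm e := by
    ext x
    show W.f e (Subtype.val x • pathVec W i k hi w (ASrc n e)) =
      Subtype.val ((Eij K n i (i + k)).f e x) • pathVec W i k hi w (ATgt n e)
    rw [map_smul]
    by_cases hsrc : i ≤ e.val ∧ e.val ≤ i + k
    · by_cases hlast : e.val = i + k
      · rw [pathVec_last W i k hi w hw e hlast,
          pathVec_of_not_mem W i k hi w (by simp only [ATgt]; omega), smul_zero, smul_zero]
      · rw [pathVec_step W i k hi w e hsrc.1 (by omega)]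
        exact congrArg (· • pathVec W i k hi w (ATgt n e))
          (Eij_f_coe (c := i) (d := i + k) e hsrc.1 (by omega) x).symm
    · rw [Eij_eq_zero (p := ASrc n e) hsrc x, map_zero]
      change (0 : K) • _ = (0 : K) • _
      rw [zero_smul, zero_smul]

theorem Eij.homOfVec_gen (hw : ∀ h : i + (k + 1) < n, pathMap W i (k + 1) h w = 0) :
    (Eij.homOfVec W i k hi w hw).φ ⟨i, hi⟩
      (Eij.gen i (i + k) ⟨i, hi⟩ ⟨le_rfl, Nat.le_add_right i k⟩) = w := by
  show (1 : K) • pathVec W i k hi w ⟨i + 0, hi⟩ = w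
  rw [one_smul, pathVec_add W i k hi w hi (Nat.zero_le k)]
  rfl

end PathVec

theorem Eij.hom_ext {W : ARep K n} {i k : ℕ} (hi : i < n)
    {f g : QRep.Hom (Eij K n i (i + k)) W}
    (h : f.φ ⟨i, hi⟩ (Eij.gen i (i + k) ⟨i, hi⟩ ⟨le_rfl, Nat.le_add_right i k⟩) =
      g.φ ⟨i, hi⟩ (Eij.gen i (i + k) ⟨i, hi⟩ ⟨le_rfl, Nat.le_add_right i k⟩))
    (p : Fin n) (x : (Eij K n i (i + k)).V p) : f.φ p x = g.φ p x := by
  by_cases hp : i ≤ p.val ∧ p.val ≤ i + k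
  · obtain ⟨p, hpn⟩ := p
    dsimp only at hp
    obtain ⟨m, rfl⟩ : ∃ m, p = i + m := ⟨p - i, by omega⟩
    rw [Eij.eq_smul_gen hp x, ← pathMap_Eij_gen le_rfl (Nat.le_add_right i k) hi m hpn hp.2,
      map_smul, map_smul, f.map_pathMap, g.map_pathMap, h]
  · rw [Eij_eq_zero hp x, map_zero, map_zero]

theorem QRep.Extension.exists_lift_pathMap_eq_zero {X Y Z : ARep K n}
    (ext : QRep.Extension X Y Z) {i m : ℕ} (h : i + m < n)
    (hX : Function.Surjective (pathMap X i m h)) (z : Z.V ⟨i, by omega⟩)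
    (hz : pathMap Z i m h z = 0) :
    ∃ y, ext.proj.φ _ y = z ∧ pathMap Y i m h y = 0 := by
  obtain ⟨y, rfl⟩ := ext.surj _ z
  obtain ⟨x, hx⟩ : pathMap Y i m h y ∈ LinearMap.range (ext.incl.φ _) := by
    rw [← ext.exact, LinearMap.mem_ker, ext.proj.map_pathMap, hz]
  obtain ⟨x, rfl⟩ := hX x
  refine ⟨y - ext.incl.φ _ x, by rw [map_sub, ext.proj_incl, sub_zero], ?_⟩
  rw [map_sub, ← ext.incl.map_pathMap, hx, sub_self]

theorem QRep.Extension.liftsFrom_Eij {X Y Z : ARep K n} (ext : QRep.Extension X Y Z)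
    {i k : ℕ} (hi : i < n)
    (hX : ∀ h : i + (k + 1) < n, Function.Surjective (pathMap X i (k + 1) h)) :
    ext.LiftsFrom (Eij K n i (i + k)) := by
  intro f
  let g := Eij.gen (K := K) i (i + k) ⟨i, hi⟩ ⟨le_rfl, Nat.le_add_right i k⟩
  obtain ⟨y, hy, hy0⟩ : ∃ y, ext.proj.φ _ y = f.φ _ g ∧
      ∀ h : i + (k + 1) < n, pathMap Y i (k + 1) h y = 0 := by
    by_cases h : i + (k + 1) < n
    · have hz : pathMap Z i (k + 1) h (f.φ _ g) = 0 := by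
        rw [← f.map_pathMap, Eij_eq_zero (by simp only; omega) (pathMap _ i (k + 1) h g),
          map_zero]
      obtain ⟨y, hy, hy0⟩ := ext.exists_lift_pathMap_eq_zero h (hX h) _ hz
      exact ⟨y, hy, fun _ => hy0⟩
    · obtain ⟨y, hy⟩ := ext.surj _ (f.φ _ g)
      exact ⟨y, hy, fun h' => absurd h' h⟩
  refine ⟨Eij.homOfVec Y i k hi y hy0, Eij.hom_ext hi
    (f := ext.proj.comp (Eij.homOfVec Y i k hi y hy0)) (g := f) ?_⟩
  show ext.proj.φ _ _ = _
  rw [Eij.homOfVec_gen, hy]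

end Lifting

theorem stmt16_general (K : Type) [Field K] (n : ℕ) (a : ℕ → ℕ)
    (hbr : IsBracketVecN n a)
    (X : ARep K n) (hX : InCat K n (condF n a) X)
    (LZ : List (ℕ × ℕ))
    (hLZ : ∀ pr ∈ LZ, pr.1 < n ∧ 1 ≤ a pr.1 ∧ pr.2 = pr.1 + a pr.1 - 1)
    (Y : ARep K n) (ext : QRep.Extension X Y (intervalSum K n LZ)) :
    ext.Trivial := by
  have hlifts : ∀ pr ∈ LZ, ext.LiftsFrom (Eij K n pr.1 pr.2) := by
    rintro ⟨i, j⟩ hpr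
    obtain ⟨hi, ha, hj⟩ : i < n ∧ 1 ≤ a i ∧ j = i + a i - 1 := hLZ _ hpr
    obtain ⟨k, hk⟩ : ∃ k, a i = k + 1 := ⟨a i - 1, by omega⟩
    obtain rfl : j = i + k := by omega
    exact ext.liftsFrom_Eij hi (pathMap_surjective_of_inCat hbr hX hk)
  obtain ⟨σ, hσ⟩ := ext.liftsFrom_dsumList _ (List.forall_mem_map.mpr hlifts) (QRep.Hom.id _)
  exact ext.trivial_of_section σ hσ

/-- if `a` is a bracket vector, `X ∈ C_a`, and `Z` is a direct sum of the
maximal intervals `E^{i,(i+a i-1)}` (with `a i ≥ 1`), then every extension of `Z` by `X`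
is trivial. -/
theorem stmt16 (K : Type) [Field K] (n : ℕ) (a : ℕ → ℕ) (hM : ∀ i < n, a i ≤ n - i)
    (hbr : IsBracketVecN n a)
    (X : ARep K n) (hX : InCat K n (condF n a) X)
    (LZ : List (ℕ × ℕ))
    (hLZ : ∀ pr ∈ LZ, pr.1 < n ∧ 1 ≤ a pr.1 ∧ pr.2 = pr.1 + a pr.1 - 1)
    (Y : ARep K n) (ext : QRep.Extension X Y (intervalSum K n LZ)) :
    ext.Trivial :=
  stmt16_general K n a hbr X hX LZ hLZ Y ext
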